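/- Let n, k, l be natural numbers and let f : Fin(n+1) → Fin(k+1) and g : Fin(n+1) → Fin(l+1) be surjective monotone maps. Then there exist a natural number p and a surjective monotone map h : Fin(n+1) → Fin(p+1) such that both f and g factor through h (i.e. f = f' ∘ h and g = g' ∘ h for monotone maps f', g'), and h is universal with this property: any surjective monotone map h' : Fin(n+1) → Fin(q+1) through which both f and g factor itself factors through h. -/

import Mathlib

/-!
The map `x ↦ (f x, g x)` is monotone for the lexicographic order, so its image is a finite chain
`Fin (p + 1)`; let `h` be the corestriction. Then `h x = h y` exactly when both `f` and `g` identify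
`x` and `y`. A monotone map constant on the fibers of a monotone surjection out of a linear order
factors monotonically through it, which gives both the factorizations of `f`, `g` through `h` and
that of `h` through any common `h'`.
-/

open Function

theorem OrderHom.exists_comp_eq_of_surjective {X Y Z : Type*} [LinearOrder X]
    [PartialOrder Y] [Preorder Z] (h : X →o Y) (hh : Surjective h) (g : X →o Z)
    (hfib : ∀ x y, h x = h y → g x = g y) : ∃ u : Y →o Z, g = u.comp h := by
  have hu : ∀ x, g (surjInv hh (h x)) = g x := fun x => hfib _ _ (surjInv_eq hh _)
  refine ⟨⟨g ∘ surjInv hh, fun t t' htt' => ?_⟩, OrderHom.ext _ _ (funext fun x => (hu x).symm)⟩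
  rcases le_total (surjInv hh t) (surjInv hh t') with hle | hge
  · exact g.mono hle
  · have htt : t = t' := le_antisymm htt' (by simpa only [surjInv_eq hh] using h.mono hge)
    rw [htt]

theorem Monotone.exists_surjective_fin_fibers_eq {X α : Type*} [Preorder X] [Finite X]
    [Nonempty X] [LinearOrder α] {F : X → α} (hF : Monotone F) :
    ∃ (p : ℕ) (h : X →o Fin (p + 1)), Surjective h ∧ ∀ x y, h x = h y ↔ F x = F y := by
  classical
  have : Fintype X := Fintype.ofFinite X
  have hcard : Fintype.card (Set.range F) = Fintype.card (Set.range F) - 1 + 1 :=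
    (Nat.sub_add_cancel Fintype.card_pos).symm
  let e := (Fintype.orderIsoFinOfCardEq (Set.range F) hcard).symm
  refine ⟨_, ⟨e ∘ Set.rangeFactorization F, e.monotone.comp hF.rangeFactorization⟩,
    e.surjective.comp Set.rangeFactorization_surjective, fun x y => ?_⟩
  simp only [OrderHom.coe_mk, comp_apply, e.apply_eq_iff_eq,
    Set.rangeFactorization_eq_rangeFactorization_iff]

theorem stmt13_general (n k l : ℕ) (f : Fin (n + 1) →o Fin (k + 1)) (g : Fin (n + 1) →o Fin (l + 1)) :
    ∃ (p : ℕ) (h : Fin (n + 1) →o Fin (p + 1)),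
      Function.Surjective h ∧
      (∃ f' : Fin (p + 1) →o Fin (k + 1), f = f'.comp h) ∧
      (∃ g' : Fin (p + 1) →o Fin (l + 1), g = g'.comp h) ∧
      ∀ (q : ℕ) (h' : Fin (n + 1) →o Fin (q + 1)), Function.Surjective h' →
        (∃ f'' : Fin (q + 1) →o Fin (k + 1), f = f''.comp h') →
        (∃ g'' : Fin (q + 1) →o Fin (l + 1), g = g''.comp h') →
        ∃ u : Fin (q + 1) →o Fin (p + 1), h = u.comp h' := by
  have hF : Monotone fun x => toLex (f x, g x) := fun _ _ hxy =>
    Prod.Lex.toLex_mono ⟨f.mono hxy, g.mono hxy⟩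
  obtain ⟨p, h, hsurj, hfib⟩ := hF.exists_surjective_fin_fibers_eq
  have hfg : ∀ x y, h x = h y → f x = f y ∧ g x = g y := fun x y hxy => by
    simpa using (hfib x y).1 hxy
  refine ⟨p, h, hsurj,
    OrderHom.exists_comp_eq_of_surjective h hsurj f fun x y hxy => (hfg x y hxy).1,
    OrderHom.exists_comp_eq_of_surjective h hsurj g fun x y hxy => (hfg x y hxy).2,
    ?_⟩
  rintro q h' hsurj' ⟨f'', rfl⟩ ⟨g'', rfl⟩
  refine OrderHom.exists_comp_eq_of_surjective h' hsurj' h fun x y hxy => ?_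
  exact (hfib x y).2 (by simp [hxy])

/-- Any two surjective monotone maps out of `Fin (n+1)` admit a minimal common quotient:
a surjective monotone map `h` through which both factor, such that `h` factors through any
other surjective monotone map through which both factor. -/
theorem stmt13 (n k l : ℕ) (f : Fin (n + 1) →o Fin (k + 1)) (g : Fin (n + 1) →o Fin (l + 1))
    (hf : Function.Surjective f) (hg : Function.Surjective g) :
    ∃ (p : ℕ) (h : Fin (n + 1) →o Fin (p + 1)),
      Function.Surjective h ∧
      (∃ f' : Fin (p + 1) →o Fin (k + 1), f = f'.comp h) ∧
      (∃ g' : Fin (p + 1) →o Fin (l + 1), g = g'.comp h) ∧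
      ∀ (q : ℕ) (h' : Fin (n + 1) →o Fin (q + 1)), Function.Surjective h' →
        (∃ f'' : Fin (q + 1) →o Fin (k + 1), f = f''.comp h') →
        (∃ g'' : Fin (q + 1) →o Fin (l + 1), g = g''.comp h') →
        ∃ u : Fin (q + 1) →o Fin (p + 1), h = u.comp h' :=
  stmt13_general n k l f g
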